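/- arXiv:1809.01688 — 4 statements merged into one kernel-verified Lean document; each statement's English description precedes it below -/
import Mathlib

section
/- Let α, λ, ρ be finite sequences of positive integers, with α of even length. Then K̆(λα²ρ) · K̆(α) + K̆(λρ) · K̆(α) = K̆(α²) · K̆(λαρ), i.e. K̆(α²)/K̆(α) = (K̆(λα²ρ) + K̆(λρ)) / K̆(λαρ), where juxtaposition denotes concatenation of sequences and α² = αα. -/
/-- Auxiliary continuant (left recursion on the reversed list). -/
def contA : List ℤ → ℤ
  | [] => 1
  | [a] => a
  | a :: b :: l => a * contA (b :: l) + contA l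

/-- Continuant `K(a₁,…,aₙ)`, satisfying `K()=1`, `K(x₁)=x₁`,
`K(x₁,…,xₙ) = xₙ·K(x₁,…,xₙ₋₁) + K(x₁,…,xₙ₋₂)`. -/
def contK (l : List ℤ) : ℤ := contA l.reverse

/-- `K̆(α)`: continuant of `α` with its last element removed. -/
def Kbr (l : List ℤ) : ℤ := contK l.dropLast

/-- `K(a₂,…,a_{n-1})`, with the convention that an invalid range gives `0`. -/
def Kmid (l : List ℤ) : ℤ := if l.length ≤ 1 then 0 else contK l.tail.dropLast

/-- The reduced matrix `M_{a₁,…,aₙ}` associated to a sequence. -/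
def Mmat (l : List ℤ) : Matrix (Fin 2) (Fin 2) ℤ :=
  !![Kmid l, contK l.tail; contK l.dropLast, contK l]

def mprod (l : List ℤ) : Matrix (Fin 2) (Fin 2) ℤ :=
  (l.map fun a => !![a, 1; 1, 0]).prod

lemma mprod_append (l₁ l₂ : List ℤ) : mprod (l₁ ++ l₂) = mprod l₁ * mprod l₂ := by
  simp [mprod]

lemma mprod_singleton (a : ℤ) : mprod [a] = !![a, 1; 1, 0] := by
  simp [mprod]

lemma contK_concat (l : List ℤ) (hl : l ≠ []) (a : ℤ) :
    contK (l ++ [a]) = a * contK l + contK l.dropLast := by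
  obtain ⟨b, m, hm⟩ : ∃ b m, l.reverse = b :: m := by
    cases h : l.reverse with
    | nil => exact absurd (by simpa using congrArg List.reverse h) hl
    | cons b m => exact ⟨b, m, rfl⟩
  have hd : l.dropLast.reverse = m := by
    have := congrArg List.reverse hm
    simp at this
    rw [this]
    cases m <;> simp
  simp only [contK, List.reverse_append, List.reverse_singleton, List.singleton_append, hm, hd]
  rfl

lemma mprod_entries (l : List ℤ) (hl : l ≠ []) :
    mprod l 0 0 = contK l ∧ mprod l 0 1 = contK l.dropLast := by
  induction l using List.reverseRecOn with
  | nil => exact absurd rfl hl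
  | append_singleton l a ih =>
    rcases eq_or_ne l [] with rfl | hne
    · constructor <;> simp [mprod_singleton, contK, contA]
    · obtain ⟨h1, h2⟩ := ih hne
      rw [mprod_append, mprod_singleton]
      constructor
      · rw [contK_concat l hne a]
        rw [Matrix.mul_apply, Fin.sum_univ_two, h1, h2]
        simp
        ring
      · rw [Matrix.mul_apply, Fin.sum_univ_two, h1]
        simp [List.dropLast_concat]

lemma Kbr_eq (l : List ℤ) (hl : l ≠ []) : Kbr l = mprod l 0 1 :=
  ((mprod_entries l hl).2).symm

lemma mprod_det (l : List ℤ) : (mprod l).det = (-1) ^ l.length := by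
  induction l with
  | nil => simp [mprod]
  | cons a l ih =>
    have : mprod (a :: l) = !![a,1;1,0] * mprod l := by simp [mprod]
    rw [this, Matrix.det_mul, ih]
    simp [Matrix.det_fin_two_of]
    ring

lemma cayley (B : Matrix (Fin 2) (Fin 2) ℤ) (h : B.det = 1) :
    B * B = (B 0 0 + B 1 1) • B - 1 := by
  rw [Matrix.det_fin_two] at h
  ext i j
  rw [Matrix.sub_apply, Matrix.smul_apply, smul_eq_mul, Matrix.mul_apply, Fin.sum_univ_two]
  fin_cases i <;> fin_cases j <;> simp [Matrix.one_apply] <;> linarith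

theorem Kbr_concat_identity (α lam rho : List ℤ)
    (hα : α ≠ []) (hlam : lam ≠ []) (hrho : rho ≠ [])
    (hαe : α.length % 2 = 0)
    (hαpos : ∀ a ∈ α, 0 < a) (hlampos : ∀ a ∈ lam, 0 < a)
    (hrhopos : ∀ a ∈ rho, 0 < a) :
    (Kbr (lam ++ α ++ α ++ rho) + Kbr (lam ++ rho)) * Kbr α =
      Kbr (α ++ α) * Kbr (lam ++ α ++ rho) := by
  have hdet : (mprod α).det = 1 := by
    rw [mprod_det, ← Nat.div_add_mod α.length 2, hαe]
    simp [pow_mul]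
  set A := mprod α with hA
  set L := mprod lam with hL
  set R := mprod rho with hR
  set t : ℤ := A 0 0 + A 1 1 with ht
  have hCH : A * A = t • A - 1 := cayley A hdet
  rw [Kbr_eq _ (by simp [hlam]), Kbr_eq _ (by simp [hlam]), Kbr_eq _ (by simp [hα]),
    Kbr_eq _ (by simp [hα]), Kbr_eq _ (by simp [hlam])]
  simp only [mprod_append, ← hA, ← hL, ← hR]
  have e1 : (L * A * A * R) 0 1 = t * ((L * A * R) 0 1) - (L * R) 0 1 := by
    rw [mul_assoc L A A, hCH, Matrix.mul_sub, Matrix.sub_mul, Matrix.mul_smul,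
      Matrix.smul_mul, Matrix.mul_one, Matrix.sub_apply, Matrix.smul_apply, smul_eq_mul,
      mul_assoc]
  have e2 : (A * A) 0 1 = t * A 0 1 := by
    rw [hCH, Matrix.sub_apply, Matrix.smul_apply, smul_eq_mul, Matrix.one_apply]
    simp
  rw [e1, e2, mul_assoc L A R]
  ring
end

section
/- Let α and β be finite sequences of positive integers, and set a = K̆(α), b = K̆(αβ), c = K̆(β). Then K̆(ααβ) = (K̆(αα)/K̆(α)) · b − c, where the ratio K̆(αα)/K̆(α) is a positive integer. -/
/-!
`Mmat α` is the product of the matrices `!![0, 1; 1, a]` over the terms `a` of `α`, so it is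
multiplicative and has determinant `(-1) ^ α.length`, and `K̆(α)` is its lower left entry.
For `α` of even length the determinant is `1`, and Cayley–Hamilton gives
`Mmat α * Mmat α = t • Mmat α - 1` with `t = tr (Mmat α) = Kmid α + contK α`, which is positive.
Reading off lower left entries of this identity, and of it multiplied by `Mmat β` on the right,
gives `K̆(αα) = t · K̆(α)` and `K̆(ααβ) = t · K̆(αβ) - K̆(β)`.
-/

lemma Matrix.mul_self_eq_trace_smul_sub_det_smul {R : Type*} [CommRing R]
    (M : Matrix (Fin 2) (Fin 2) R) : M * M = M.trace • M - M.det • 1 := by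
  nontriviality R
  have h := M.aeval_self_charpoly
  rw [Matrix.charpoly_fin_two] at h
  simp only [map_add, map_sub, map_mul, Polynomial.aeval_X, Polynomial.aeval_C,
    Algebra.algebraMap_eq_smul_one, smul_mul_assoc, one_mul, sq] at h
  rw [← sub_eq_zero, ← h]
  abel

lemma contA_append_singleton (a : ℤ) :
    ∀ l : List ℤ, l ≠ [] → contA (l ++ [a]) = a * contA l + contA l.dropLast
  | [b], _ => by
    simp only [List.cons_append, List.nil_append, List.dropLast_singleton, contA]
    ring
  | [b, c], _ => by
    simp only [List.cons_append, List.nil_append, List.dropLast_cons_cons,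
      List.dropLast_singleton, contA]
    ring
  | b :: c :: d :: l, _ => by
    have ih₁ := contA_append_singleton a (c :: d :: l) (List.cons_ne_nil _ _)
    have ih₂ := contA_append_singleton a (d :: l) (List.cons_ne_nil _ _)
    simp only [List.cons_append, List.dropLast_cons_cons] at ih₁ ih₂ ⊢
    rw [contA.eq_3, ih₁, ih₂]
    simp only [contA.eq_3]
    ring

lemma contK_cons (a : ℤ) {l : List ℤ} (hl : l ≠ []) :
    contK (a :: l) = a * contK l + contK l.tail := by
  rw [contK, List.reverse_cons, contA_append_singleton a l.reverse (by simpa),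
    List.dropLast_reverse]
  rfl

lemma contK_pos {l : List ℤ} (h : ∀ a ∈ l, 0 < a) : 0 < contK l := by
  suffices ∀ l : List ℤ, (∀ a ∈ l, 0 < a) → 0 < contA l from
    this l.reverse (fun a ha => h a (List.mem_reverse.mp ha))
  intro l
  induction l using contA.induct with
  | case1 => exact fun _ => one_pos
  | case2 a => exact fun h => h a List.mem_cons_self
  | case3 a b l ih₁ ih₂ =>
    intro h
    have ha := h a List.mem_cons_self
    have h₁ := ih₁ fun x hx => h x (List.mem_cons_of_mem _ hx)
    have h₂ := ih₂ fun x hx => h x (by simp [hx])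
    rw [contA]
    positivity

lemma Kmid_cons (a : ℤ) {l : List ℤ} (hl : l ≠ []) : Kmid (a :: l) = contK l.dropLast := by
  obtain ⟨b, l, rfl⟩ := List.exists_cons_of_ne_nil hl
  simp [Kmid]

lemma contK_dropLast_cons (a : ℤ) :
    ∀ {l : List ℤ}, l ≠ [] → contK (a :: l).dropLast = Kmid l + a * contK l.dropLast
  | [b], _ => by simp [Kmid, contK, contA]
  | b :: c :: m, _ => by
    rw [List.dropLast_cons_cons, List.dropLast_cons_cons, contK_cons a (List.cons_ne_nil _ _),
      Kmid_cons b (List.cons_ne_nil _ _), List.tail_cons]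
    ring

lemma Mmat_singleton (a : ℤ) : Mmat [a] = !![0, 1; 1, a] := by
  simp [Mmat, Kmid, contK, contA]

lemma Mmat_cons (a : ℤ) {l : List ℤ} (hl : l ≠ []) :
    Mmat (a :: l) = !![0, 1; 1, a] * Mmat l := by
  rw [Mmat, Mmat, Matrix.mul_fin_two, Kmid_cons a hl, contK_dropLast_cons a hl, contK_cons a hl]
  simp only [List.tail_cons, zero_mul, one_mul, zero_add, add_comm (a * contK l)]

lemma Mmat_append : ∀ {α : List ℤ}, α ≠ [] → ∀ {β : List ℤ}, β ≠ [] →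
    Mmat (α ++ β) = Mmat α * Mmat β
  | [a], _, _, hβ => by rw [List.singleton_append, Mmat_cons a hβ, Mmat_singleton]
  | a :: b :: l, _, _, hβ => by
    rw [List.cons_append, Mmat_cons a (by simp), Mmat_append (List.cons_ne_nil b l) hβ,
      Mmat_cons a (List.cons_ne_nil b l), Matrix.mul_assoc]

lemma det_Mmat : ∀ {α : List ℤ}, α ≠ [] → (Mmat α).det = (-1) ^ α.length
  | [a], _ => by simp [Mmat_singleton, Matrix.det_fin_two_of]
  | a :: b :: l, _ => by
    rw [Mmat_cons a (List.cons_ne_nil b l), Matrix.det_mul, det_Mmat (List.cons_ne_nil b l),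
      Matrix.det_fin_two_of]
    simp [pow_succ]

lemma Kbr_eq_Mmat (l : List ℤ) : Kbr l = Mmat l 1 0 := rfl

lemma trace_Mmat_pos {l : List ℤ} (h : ∀ a ∈ l, 0 < a) : 0 < (Mmat l).trace := by
  have hmid : 0 ≤ Kmid l := by
    unfold Kmid
    split
    · exact le_rfl
    · exact (contK_pos fun a ha => h a (List.tail_subset l (List.dropLast_subset _ ha))).le
  rw [Matrix.trace_fin_two]
  simpa [Mmat] using add_pos_of_nonneg_of_pos hmid (contK_pos h)

theorem Kbr_recurrence_general (α β : List ℤ) (hα : α ≠ []) (hβ : β ≠ [])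
    (hαe : α.length % 2 = 0)
    (hαpos : ∀ a ∈ α, 0 < a) :
    Kbr α ∣ Kbr (α ++ α) ∧ 0 < Kbr (α ++ α) / Kbr α ∧
      Kbr (α ++ α ++ β) =
        (Kbr (α ++ α) / Kbr α) * Kbr (α ++ β) - Kbr β := by
  set t := (Mmat α).trace
  have hdet : (Mmat α).det = 1 := by
    rw [det_Mmat hα, (Nat.even_iff.mpr hαe).neg_one_pow]
  have hsq : Mmat α * Mmat α = t • Mmat α - 1 := by
    rw [Matrix.mul_self_eq_trace_smul_sub_det_smul, hdet, one_smul]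
  have hαα : Kbr (α ++ α) = t * Kbr α := by
    rw [Kbr_eq_Mmat, Mmat_append hα hα, hsq, Matrix.sub_apply, Matrix.smul_apply,
      Matrix.one_apply_ne (by decide), sub_zero, smul_eq_mul, Kbr_eq_Mmat]
  have hααβ : Kbr (α ++ α ++ β) = t * Kbr (α ++ β) - Kbr β := by
    rw [Kbr_eq_Mmat, Mmat_append (by simp [hα]) hβ, Mmat_append hα hα, hsq, Kbr_eq_Mmat,
      Mmat_append hα hβ, Kbr_eq_Mmat, Matrix.sub_mul, Matrix.smul_mul, Matrix.one_mul,
      Matrix.sub_apply, Matrix.smul_apply, smul_eq_mul]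
  have hKbr : 0 < Kbr α := contK_pos fun a ha => hαpos a (List.dropLast_subset α ha)
  have hquot : Kbr (α ++ α) / Kbr α = t := by
    rw [hαα, Int.mul_ediv_cancel _ hKbr.ne']
  exact ⟨hαα ▸ dvd_mul_left _ _, hquot ▸ trace_Mmat_pos hαpos, by rw [hquot, hααβ]⟩

theorem Kbr_recurrence (α β : List ℤ) (hα : α ≠ []) (hβ : β ≠ [])
    (hαe : α.length % 2 = 0)
    (hαpos : ∀ a ∈ α, 0 < a) (hβpos : ∀ a ∈ β, 0 < a) :
    Kbr α ∣ Kbr (α ++ α) ∧ 0 < Kbr (α ++ α) / Kbr α ∧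
      Kbr (α ++ α ++ β) =
        (Kbr (α ++ α) / Kbr α) * Kbr (α ++ β) - Kbr β :=
  Kbr_recurrence_general α β hα hβ hαe hαpos
end

section
/- Let α = (1, p, a_3, ..., a_{n-2}, p+1, q) be a sequence of positive integers such that the subsequence (a_3,...,a_{n-2}) is palindromic (equal to its reversal). Then K̆(α²) / K̆(α) = (q+1) · K̆(α), i.e. K̆(αα) = (q+1) · K̆(α)². -/
/-- Concatenation formula for continuants:
`K(u ++ v) = K(u)·K(v) + K(u⁻)·K(v without its head)` for nonempty `u`, `v`. -/
theorem contA_append : ∀ (u : List ℤ), u ≠ [] → ∀ (y : ℤ) (v : List ℤ),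
    contA (u ++ y :: v) = contA u * contA (y :: v) + contA u.dropLast * contA v
  | [], h, _, _ => absurd rfl h
  | [x], _, y, v => by cases v <;> simp [contA]
  | [x, b], _, y, v => by cases v <;> simp [contA] <;> ring
  | x :: b :: c :: u, _, y, v => by
      have h1 := contA_append (b :: c :: u) (by simp) y v
      have h2 := contA_append (c :: u) (by simp) y v
      simp only [List.cons_append, contA, List.dropLast, List.append_eq] at *
      rw [h1, h2]
      rcases u with _ | ⟨d, u⟩ <;> simp [contA] <;> ring

/-- Continuants are invariant under reversal. -/
theorem contA_reverse : ∀ (l : List ℤ), contA l.reverse = contA l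
  | [] => rfl
  | [a] => rfl
  | a :: b :: l => by
      have h1 := contA_reverse (b :: l)
      have h2 := contA_reverse l
      have h3 : (a :: b :: l).reverse = (b :: l).reverse ++ [a] := by simp
      rw [h3, contA_append _ (by simp) a []]
      have h4 : (b :: l).reverse.dropLast = l.reverse := by
        rw [List.reverse_cons, List.dropLast_concat]
      rw [h4, h1, h2]
      simp [contA]
      ring

/-- Trailing `a, 1` can be replaced by `a + 1`. -/
theorem contA_one (m : List ℤ) (a : ℤ) : contA (m ++ [a, 1]) = contA (m ++ [a + 1]) := by
  rcases m with _ | ⟨x, m⟩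
  · simp [contA]
  · have h1 : [a, 1] = a :: [(1:ℤ)] := rfl
    have h2 : [a + 1] = (a+1) :: ([] : List ℤ) := rfl
    rw [h1, h2, contA_append _ (by simp), contA_append _ (by simp)]
    simp [contA]

theorem Kbr_palindromic (p q : ℤ) (m : List ℤ)
    (hp : 0 < p) (hq : 0 < q) (hm : ∀ a ∈ m, 0 < a) (hpal : m.reverse = m) :
    Kbr ((1 :: p :: (m ++ [p + 1, q])) ++ (1 :: p :: (m ++ [p + 1, q]))) =
      (q + 1) * Kbr (1 :: p :: (m ++ [p + 1, q])) ^ 2 := by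
  set γ : List ℤ := (p + 1) :: (m ++ [p, 1]) with hγ
  set w : List ℤ := m ++ [p + 1] with hw
  set α : List ℤ := 1 :: p :: (m ++ [p + 1, q]) with hα
  set β : List ℤ := 1 :: p :: (m ++ [p + 1]) with hβ
  have hαβ : α = β ++ [q] := by simp [hα, hβ]
  have hαd : α.dropLast = β := by rw [hαβ, List.dropLast_concat]
  have hrevβ : β.reverse = γ := by simp [hβ, hγ, hpal]
  have hrevα : α.reverse = q :: γ := by simp [hα, hγ, hpal]
  have hγsplit : γ = ((p + 1) :: (m ++ [p])) ++ [1] := by simp [hγ]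
  have hdropγ : γ.dropLast = (p + 1) :: (m ++ [p]) := by
    rw [hγsplit, List.dropLast_concat]
  have hdrop_rev : ((p + 1) :: (m ++ [p])).reverse = p :: w := by simp [hw, hpal]
  have htailγ : γ.tail = m ++ [p, 1] := rfl
  -- the key palindromic identity
  have hrevγ : γ.reverse = β := by rw [← hrevβ, List.reverse_reverse]
  have e1 : contA γ = contA (p :: w) + contA w := by
    rw [← contA_reverse γ, hrevγ, hβ, ← hw]
    simp only [contA]
    ring
  have e2 : contA γ.dropLast = contA (p :: w) := by
    rw [hdropγ, ← contA_reverse ((p + 1) :: (m ++ [p])), hdrop_rev]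
  have e3 : contA γ.tail = contA w := by
    rw [htailγ, hw, contA_one]
  have key : contA γ = contA γ.dropLast + contA γ.tail := by rw [e1, e2, e3]
  -- reduce goal to contA statement
  have hααd : (α ++ α).dropLast = α ++ β := by
    rw [hαβ, ← List.append_assoc, List.dropLast_concat]
  have hmain : Kbr (α ++ α) = contA (γ ++ q :: γ) := by
    unfold Kbr contK
    rw [hααd, List.reverse_append, hrevβ, hrevα]
  have hsingle : Kbr α = contA γ := by
    unfold Kbr contK
    rw [hαd, hrevβ]
  rw [hmain, hsingle, contA_append γ (by rw [hγ]; simp) q γ]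
  have hqγ : contA (q :: γ) = q * contA γ + contA γ.tail := by
    rw [hγ]
    simp only [contA, List.tail_cons]
  rw [hqγ]
  linear_combination (-(contA γ)) * key
end

section
/- Every positive integer solution of x² + y² + z² = 3xyz can be obtained from (1,1,1) by a finite sequence of the operations (a,b,c) ↦ (a, 3ab−c, b) and permutations of the entries. -/
/-- One elementary move on Markov-like triples: either the branching move
`(a,b,c) ↦ (a, 3ab − c, b)` or a permutation of the entries. -/
def markovStep (t s : ℤ × ℤ × ℤ) : Prop :=
  ∃ a b c, t = (a, b, c) ∧
    (s = (a, 3 * a * b - c, b) ∨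
      s = (a, b, c) ∨ s = (a, c, b) ∨ s = (b, a, c) ∨ s = (b, c, a) ∨
      s = (c, a, b) ∨ s = (c, b, a))

/-!
Markov descent. For a positive solution sorted as `x ≥ y ≥ z`, the equation is quadratic in `x`
with second root `x' = 3yz - x = (y² + z²) / x` (Vieta). If `x > y` then `0 < x' ≤ y`, so
`(y, z, x')` is a positive solution with a smaller sum, and one branching move followed by a
permutation leads from it back to `(x, y, z)`. If `x = y`, the equation forces `x = y = z = 1`.
-/

section Markov

variable {a b c : ℤ}

theorem markovStep_branch (a b c : ℤ) : markovStep (a, b, c) (a, 3 * a * b - c, b) :=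
  ⟨a, b, c, rfl, Or.inl rfl⟩

theorem markovStep_swap_left (a b c : ℤ) : markovStep (a, b, c) (b, a, c) :=
  ⟨a, b, c, rfl, by tauto⟩

theorem markovStep_swap_right (a b c : ℤ) : markovStep (a, b, c) (a, c, b) :=
  ⟨a, b, c, rfl, by tauto⟩

theorem markovStep_swap_outer (a b c : ℤ) : markovStep (a, b, c) (c, b, a) :=
  ⟨a, b, c, rfl, by tauto⟩

theorem markov_vieta (h : a ^ 2 + b ^ 2 + c ^ 2 = 3 * a * b * c) :
    b ^ 2 + c ^ 2 + (3 * b * c - a) ^ 2 = 3 * b * c * (3 * b * c - a) := by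
  linear_combination h

theorem markov_vieta_pos (ha : 0 < a) (hb : 0 < b) (h : a ^ 2 + b ^ 2 + c ^ 2 = 3 * a * b * c) :
    0 < 3 * b * c - a := by
  have hprod : a * (3 * b * c - a) = b ^ 2 + c ^ 2 := by linear_combination -h
  exact pos_of_mul_pos_right (hprod ▸ by positivity) ha.le

theorem markov_vieta_le (hc : 0 < c) (hcb : c ≤ b) (hba : b < a)
    (h : a ^ 2 + b ^ 2 + c ^ 2 = 3 * a * b * c) : 3 * b * c - a ≤ b := by
  have hprod : (b - a) * (b - (3 * b * c - a)) = 2 * b ^ 2 + c ^ 2 - 3 * b ^ 2 * c := by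
    linear_combination -h
  have hc_le_sq : c ≤ b ^ 2 := by nlinarith
  have hnonpos : 2 * b ^ 2 + c ^ 2 - 3 * b ^ 2 * c ≤ 0 := by nlinarith
  by_contra! hlt
  nlinarith

theorem markov_eq_one_of_eq (hc : 0 < c) (hca : c ≤ a)
    (h : a ^ 2 + a ^ 2 + c ^ 2 = 3 * a * a * c) : a = 1 ∧ c = 1 := by
  have hsq : a ^ 2 * (3 * c - 2) = c ^ 2 := by linear_combination -h
  have hc_sq : c ^ 2 ≤ a ^ 2 := pow_le_pow_left₀ hc.le hca 2
  have hc1 : c = 1 := by nlinarith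
  subst hc1
  refine ⟨?_, rfl⟩
  nlinarith

end Markov

theorem markov_triples_from_one (x y z : ℤ)
    (hx : 0 < x) (hy : 0 < y) (hz : 0 < z)
    (h : x ^ 2 + y ^ 2 + z ^ 2 = 3 * x * y * z) :
    Relation.ReflTransGen markovStep (1, 1, 1) (x, y, z) := by
  obtain ⟨n, hn⟩ : ∃ n, (x + y + z).toNat = n := ⟨_, rfl⟩
  induction n using Nat.strong_induction_on generalizing x y z with
  | _ n ih =>
  wlog hyx : y ≤ x generalizing x y z
  · exact (this y x z hy hx hz (by linear_combination h) (by omega) (by omega)).tail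
      (markovStep_swap_left y x z)
  wlog hzx : z ≤ x generalizing x y z
  · exact (this z y x hz hy hx (by linear_combination h) (by omega) (by omega) (by omega)).tail
      (markovStep_swap_outer z y x)
  wlog hzy : z ≤ y generalizing x y z
  · exact (this x z y hx hz hy (by linear_combination h) (by omega) hzx hyx (by omega)).tail
      (markovStep_swap_right x z y)
  obtain rfl | hyx := hyx.eq_or_lt
  · obtain ⟨rfl, rfl⟩ := markov_eq_one_of_eq hz hzx h
    exact .refl
  have hx'_le : 3 * y * z - x ≤ y := markov_vieta_le hz hzy hyx h
  have hsmaller := ih _ (by omega) y z (3 * y * z - x) hy hz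
    (markov_vieta_pos hx hy h) (markov_vieta h) rfl
  have hbranch : markovStep (y, z, 3 * y * z - x) (y, x, z) := by
    simpa using markovStep_branch y z (3 * y * z - x)
  exact (hsmaller.tail hbranch).tail (markovStep_swap_left y x z)
end
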